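/- Let p be a prime, n ≥ 2, m ≥ 1 an integer and 1 ≤ i ≤ n-1. For any g ∈ K_m with block form g = [[a,b],[c,d]], the block a lies in GL_{n-1}(ℤ_p), the matrix g' = [[a,b],[0,1]] lies in K_m, and g'^{-1}·g ∈ K_m ∩ ϖ^{f^i} K_m ϖ^{-f^i}; in particular g and g' represent the same left coset of K_m ∩ ϖ^{f^i} K_m ϖ^{-f^i} in K_m. -/

import Mathlib

/-!
Conventions: throughout, the paper's dimension `n ≥ 2` is represented as `n + 1`
where `n : ℕ` satisfies `n ≥ 1`; so matrices in the paper's `GL_n(ℚ_p)` are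
`(n+1) × (n+1)` matrices here, and tuples in the paper's `ℤ^{n-1}` are `f : Fin n → ℤ`.
Elements of `GL(ℚ_p)` are represented as square matrices `g` with `IsUnit g`.
-/

/-- `ψ : ℚ_p → ℂ` is an additive character with conductor `ℤ_p`: a continuous
homomorphism from `(ℚ_p, +)` to the unit circle in `ℂ`, trivial on `ℤ_p`
(the elements of norm at most `1`) but nontrivial on `p⁻¹ℤ_p`
(the elements of norm at most `p`). -/
structure IsAddCharCondZp (p : ℕ) [Fact p.Prime] (ψ : ℚ_[p] → ℂ) : Prop where
  map_add : ∀ x y, ψ (x + y) = ψ x * ψ y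
  continuous : Continuous ψ
  abs_eq_one : ∀ x, ‖ψ x‖ = 1
  trivial_on_int : ∀ x : ℚ_[p], ‖x‖ ≤ 1 → ψ x = 1
  nontrivial_on : ∃ x : ℚ_[p], ‖x‖ ≤ (p : ℝ) ∧ ψ x ≠ 1

variable (p : ℕ) [Fact p.Prime]

/-- `ϖ^f = diag(p^{f 0}, …, p^{f (n-1)}, 1)`. -/
noncomputable def varpi (n : ℕ) (f : Fin n → ℤ) : Matrix (Fin (n + 1)) (Fin (n + 1)) ℚ_[p] :=
  Matrix.diagonal (Fin.snoc (fun j => (p : ℚ_[p]) ^ f j) 1)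

/-- `f` is dominant: `f 0 ≥ f 1 ≥ … ≥ f (n-1) ≥ 0`. -/
def Dominant (n : ℕ) (f : Fin n → ℤ) : Prop :=
  Antitone f ∧ ∀ j, 0 ≤ f j

/-- membership in `U`, the group of upper triangular unipotent matrices. -/
def IsUnipUpper (n : ℕ) (u : Matrix (Fin (n + 1)) (Fin (n + 1)) ℚ_[p]) : Prop :=
  (∀ i j, j < i → u i j = 0) ∧ ∀ i, u i i = 1

/-- the extension of `ψ` to `U`: `ψ(u) = ψ(u_{1,2} + u_{2,3} + … + u_{n-1,n})`. -/
noncomputable def psiU (n : ℕ) (ψ : ℚ_[p] → ℂ)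
    (u : Matrix (Fin (n + 1)) (Fin (n + 1)) ℚ_[p]) : ℂ :=
  ψ (∑ i : Fin n, u i.castSucc i.succ)

/-- the block matrix `[[a, b], [c, d]]` with top-left `n × n` block `a`,
top-right column `b`, bottom row `c` and bottom-right scalar `d`. -/
def blk (n : ℕ) (a : Matrix (Fin n) (Fin n) ℚ_[p]) (b c : Fin n → ℚ_[p]) (d : ℚ_[p]) :
    Matrix (Fin (n + 1)) (Fin (n + 1)) ℚ_[p] :=
  Matrix.of (Fin.snoc (fun i => Fin.snoc (a i) (b i)) (Fin.snoc c d))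

/-- membership in `K_m ⊆ GL_{n+1}(ℤ_p)`: integral entries, determinant a unit of `ℤ_p`,
and last row congruent to `(0, …, 0, 1)` modulo `p^m`. -/
def InK (n m : ℕ) (g : Matrix (Fin (n + 1)) (Fin (n + 1)) ℚ_[p]) : Prop :=
  (∀ i j, ‖g i j‖ ≤ 1) ∧ ‖g.det‖ = 1 ∧
    (∀ j : Fin n, ‖g (Fin.last n) j.castSucc‖ ≤ (p : ℝ) ^ (-(m : ℤ))) ∧
    ‖g (Fin.last n) (Fin.last n) - 1‖ ≤ (p : ℝ) ^ (-(m : ℤ))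

/-- `f^i = (1, …, 1, 0, …, 0)` with `i` ones. -/
def fvec (n i : ℕ) : Fin n → ℤ := fun j => if (j : ℕ) < i then 1 else 0

/-- membership in `K_m ∩ ϖ^{f^i} K_m ϖ^{-f^i}`
(`g ∈ ϖ^{f^i} K_m ϖ^{-f^i}` iff `ϖ^{-f^i} g ϖ^{f^i} ∈ K_m`). -/
def InKcap (n m i : ℕ) (g : Matrix (Fin (n + 1)) (Fin (n + 1)) ℚ_[p]) : Prop :=
  InK p n m g ∧ InK p n m (varpi p n (-(fvec n i)) * g * varpi p n (fvec n i))

/-- membership in `H = GL_n(ℤ_p)`. -/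
def InH (n : ℕ) (h : Matrix (Fin n) (Fin n) ℚ_[p]) : Prop :=
  (∀ i j, ‖h i j‖ ≤ 1) ∧ ‖h.det‖ = 1

/-- `𝜛_i = diag(p, …, p, 1, …, 1)` with `i` entries equal to `p`. -/
noncomputable def wSm (n i : ℕ) : Matrix (Fin n) (Fin n) ℚ_[p] :=
  Matrix.diagonal (fun j => if (j : ℕ) < i then (p : ℚ_[p]) else 1)

/-- `𝜛_i⁻¹ = diag(p⁻¹, …, p⁻¹, 1, …, 1)` with `i` entries equal to `p⁻¹`. -/
noncomputable def wSmInv (n i : ℕ) : Matrix (Fin n) (Fin n) ℚ_[p] :=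
  Matrix.diagonal (fun j => if (j : ℕ) < i then (p : ℚ_[p])⁻¹ else 1)

/-- membership in `H ∩ 𝜛_i H 𝜛_i⁻¹` (`a ∈ 𝜛_i H 𝜛_i⁻¹` iff `𝜛_i⁻¹ a 𝜛_i ∈ H`). -/
def InHcap (n i : ℕ) (a : Matrix (Fin n) (Fin n) ℚ_[p]) : Prop :=
  InH p n a ∧ InH p n (wSmInv p n i * a * wSm p n i)

/-- membership in `L_i = (pℤ_p)^i × ℤ_p^{n-i} ⊆ ℤ_p^n`. -/
def InL (n i : ℕ) (v : Fin n → ℚ_[p]) : Prop :=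
  ∀ j : Fin n, if (j : ℕ) < i then ‖v j‖ ≤ (p : ℝ)⁻¹ else ‖v j‖ ≤ 1

/-- `R` is a complete set of representatives for the left cosets
`H/(H ∩ 𝜛_i H 𝜛_i⁻¹)`: `R ⊆ H` and every `h ∈ H` lies in the coset of
exactly one element of `R`. -/
def IsRepsH (n i : ℕ) (R : Set (Matrix (Fin n) (Fin n) ℚ_[p])) : Prop :=
  (∀ r ∈ R, InH p n r) ∧ ∀ h, InH p n h → ∃! r, r ∈ R ∧ InHcap p n i (r⁻¹ * h)

/-- `S` is a complete set of representatives for `ℤ_p^n/(a·L_i)`: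
`S ⊆ ℤ_p^n` and every `v ∈ ℤ_p^n` is congruent modulo `a·L_i` to
exactly one element of `S`. -/
def IsRepsL (n i : ℕ) (a : Matrix (Fin n) (Fin n) ℚ_[p]) (S : Set (Fin n → ℚ_[p])) : Prop :=
  (∀ x ∈ S, ∀ j, ‖x j‖ ≤ 1) ∧
    ∀ v : Fin n → ℚ_[p], (∀ j, ‖v j‖ ≤ 1) →
      ∃! x, x ∈ S ∧ ∃ w, InL p n i w ∧ v - x = a.mulVec w

/-- `I_i`: the set of `ε ∈ {0,1}^n ⊆ ℤ^n` with `Σ_j ε_j = i`. -/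
def ISet (n i : ℕ) : Set (Fin n → ℤ) :=
  {ε | (∀ j, ε j = 0 ∨ ε j = 1) ∧ ∑ j, ε j = (i : ℤ)}

/-!
Modulo `p^m`, `m ≥ 1`, the last row of `g` is `(0, …, 0, 1)`, so expanding `det g` along it gives
`det g ≡ det a`, and `a ∈ GL_{n-1}(ℤ_p)`. Hence `g'` is integral with unit determinant, so `g'⁻¹`
is integral and `g'⁻¹ g - 1 = g'⁻¹ (g - g')` is divisible by `p^m`, because `g - g'` is the last
row `(c, d - 1)`. So `g'⁻¹ g` lies in the principal congruence subgroup `Γ(p^m) ⊆ K_m`.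
Conjugation by `ϖ^{-f^i}` multiplies the entry `(j, k)` by `p^{f_j - f_k}` with `f_j - f_k ≤ 1`
and leaves the last row unscaled; the entries multiplied by `p` are off the diagonal, hence
divisible by `p^m`, and stay integral.
-/

open Matrix IsUltrametricDist

section Ultrametric

theorem norm_add_eq_left_of_norm_lt {E : Type*} [SeminormedAddCommGroup E] [IsUltrametricDist E]
    {x y : E} (h : ‖y‖ < ‖x‖) : ‖x + y‖ = ‖x‖ := by
  rw [norm_add_eq_max_of_norm_ne_norm h.ne', max_eq_left h.le]

variable {K : Type*} [NormedField K] [IsUltrametricDist K]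

theorem Matrix.norm_mul_apply_le {ι κ ν : Type*} [Fintype κ] {ε : ℝ} (hε : 0 ≤ ε)
    {A : Matrix ι κ K} {B : Matrix κ ν K} (hA : ∀ j k, ‖A j k‖ ≤ 1) (hB : ∀ j k, ‖B j k‖ ≤ ε)
    (j : ι) (k : ν) : ‖(A * B) j k‖ ≤ ε := by
  rw [mul_apply]
  refine norm_sum_le_of_forall_le_of_nonneg hε fun l _ => ?_
  rw [norm_mul]
  exact (mul_le_mul (hA j l) (hB l k) (norm_nonneg _) zero_le_one).trans_eq (one_mul ε)

variable {ι : Type*} [Fintype ι] [DecidableEq ι]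

theorem Matrix.norm_det_le_prod (M : Matrix ι ι K) {w : ι → ℝ} (hw : ∀ j, 0 ≤ w j)
    (h : ∀ j k, ‖M j k‖ ≤ w j) : ‖M.det‖ ≤ ∏ j, w j := by
  rw [det_apply]
  refine norm_sum_le_of_forall_le_of_nonneg (Finset.prod_nonneg fun j _ => hw j) fun σ _ => ?_
  have hsign : ‖Equiv.Perm.sign σ • ∏ k, M (σ k) k‖ = ∏ k, ‖M (σ k) k‖ := by
    rcases Int.units_eq_one_or (Equiv.Perm.sign σ) with h1 | h1 <;> simp [h1]
  rw [hsign, ← Equiv.prod_comp σ w]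
  exact Finset.prod_le_prod (fun _ _ => norm_nonneg _) fun k _ => h _ _

theorem Matrix.norm_inv_apply_le_one {A : Matrix ι ι K} (hA : ∀ j k, ‖A j k‖ ≤ 1)
    (hdet : ‖A.det‖ = 1) (j k : ι) : ‖A⁻¹ j k‖ ≤ 1 := by
  rw [inv_def, smul_apply, smul_eq_mul, norm_mul, Ring.inverse_eq_inv', norm_inv, hdet, inv_one,
    one_mul, adjugate_apply]
  refine (norm_det_le_prod _ (w := fun _ => 1) (fun _ => zero_le_one) fun j' k' => ?_).trans_eq
    Finset.prod_const_one
  rw [updateRow_apply]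
  split_ifs
  · by_cases hk : k' = j <;> simp [hk]
  · exact hA _ _

end Ultrametric

section Blocks

variable {n : ℕ} (a a' : Matrix (Fin n) (Fin n) ℚ_[p]) (b b' c c' : Fin n → ℚ_[p]) (d d' : ℚ_[p])

@[simp]
theorem blk_castSucc_castSucc (j k : Fin n) : blk p n a b c d j.castSucc k.castSucc = a j k := by
  simp [blk]

@[simp]
theorem blk_castSucc_last (j : Fin n) : blk p n a b c d j.castSucc (Fin.last n) = b j := by
  simp [blk]

@[simp]
theorem blk_last_castSucc (k : Fin n) : blk p n a b c d (Fin.last n) k.castSucc = c k := by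
  simp [blk]

@[simp]
theorem blk_last_last : blk p n a b c d (Fin.last n) (Fin.last n) = d := by
  simp [blk]

theorem blk_sub :
    blk p n a b c d - blk p n a' b' c' d' = blk p n (a - a') (b - b') (c - c') (d - d') := by
  ext j k
  refine Fin.lastCases ?_ (fun j => ?_) j <;> refine Fin.lastCases ?_ (fun k => ?_) k <;> simp

theorem forall_norm_blk_apply_le_iff {C : ℝ} :
    (∀ j k, ‖blk p n a b c d j k‖ ≤ C) ↔
      (∀ j k, ‖a j k‖ ≤ C) ∧ (∀ j, ‖b j‖ ≤ C) ∧ (∀ k, ‖c k‖ ≤ C) ∧ ‖d‖ ≤ C := by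
  simp only [Fin.forall_fin_succ', blk_castSucc_castSucc, blk_castSucc_last, blk_last_castSucc,
    blk_last_last, forall_and]
  tauto

theorem updateRow_last_blk :
    (blk p n a b c d).updateRow (Fin.last n) (Fin.snoc c' d') = blk p n a b c' d' := by
  ext j k
  refine Fin.lastCases ?_ (fun j => ?_) j
  · refine Fin.lastCases ?_ (fun k => ?_) k <;> simp
  · rw [updateRow_ne (Fin.castSucc_lt_last j).ne]
    refine Fin.lastCases ?_ (fun k => ?_) k <;> simp

theorem det_blk_zero : (blk p n a b 0 d).det = d * a.det := by
  rw [det_succ_row _ (Fin.last n), Fin.sum_univ_castSucc]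
  have hminor : (blk p n a b 0 d).submatrix Fin.castSucc Fin.castSucc = a := by
    ext j k
    simp
  simp [hminor]

theorem det_blk : (blk p n a b c d).det = d * a.det + (blk p n a b c 0).det := by
  have hrow : (Fin.snoc (0 : Fin n → ℚ_[p]) d + Fin.snoc c 0 : Fin (n + 1) → ℚ_[p]) =
      Fin.snoc c d := by
    funext k
    refine Fin.lastCases ?_ (fun k => ?_) k <;> simp
  calc (blk p n a b c d).det
      = ((blk p n a b c 0).updateRow (Fin.last n) (Fin.snoc 0 d + Fin.snoc c 0)).det := by
        rw [hrow, updateRow_last_blk]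
    _ = d * a.det + (blk p n a b c 0).det := by
        rw [det_updateRow_add, updateRow_last_blk, updateRow_last_blk, det_blk_zero]

end Blocks

section CongruenceSubgroups

variable {n m : ℕ}

theorem zpow_neg_natCast_le_one (m : ℕ) : (p : ℝ) ^ (-(m : ℤ)) ≤ 1 :=
  zpow_le_one_of_nonpos₀ (Nat.one_le_cast.2 (Fact.out : p.Prime).one_le) (by omega)

theorem zpow_neg_natCast_lt_one (hm : 1 ≤ m) : (p : ℝ) ^ (-(m : ℤ)) < 1 :=
  zpow_lt_one_of_neg₀ (Nat.one_lt_cast.2 (Fact.out : p.Prime).one_lt) (by omega)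

def InPrincipalCongr {ι : Type*} [Fintype ι] [DecidableEq ι] (m : ℕ) (M : Matrix ι ι ℚ_[p]) :
    Prop :=
  (∀ j k, ‖(M - 1) j k‖ ≤ (p : ℝ) ^ (-(m : ℤ))) ∧ ‖M.det‖ = 1

variable {p}

theorem inK_blk_iff (a : Matrix (Fin n) (Fin n) ℚ_[p]) (b c : Fin n → ℚ_[p]) (d : ℚ_[p]) :
    InK p n m (blk p n a b c d) ↔
      (∀ j k, ‖a j k‖ ≤ 1) ∧ (∀ j, ‖b j‖ ≤ 1) ∧ ‖(blk p n a b c d).det‖ = 1 ∧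
        (∀ k, ‖c k‖ ≤ (p : ℝ) ^ (-(m : ℤ))) ∧ ‖d - 1‖ ≤ (p : ℝ) ^ (-(m : ℤ)) := by
  simp only [InK, forall_norm_blk_apply_le_iff, blk_last_castSucc, blk_last_last]
  constructor
  · rintro ⟨⟨ha, hb, -, -⟩, hdet, hc, hd⟩
    exact ⟨ha, hb, hdet, hc, hd⟩
  rintro ⟨ha, hb, hdet, hc, hd⟩
  refine ⟨⟨ha, hb, fun k => (hc k).trans (zpow_neg_natCast_le_one p m), ?_⟩, hdet, hc, hd⟩
  calc ‖d‖ = ‖(d - 1) + 1‖ := by rw [sub_add_cancel]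
    _ ≤ max ‖d - 1‖ ‖(1 : ℚ_[p])‖ := norm_add_le_max _ _
    _ ≤ 1 := max_le (hd.trans (zpow_neg_natCast_le_one p m)) norm_one.le

theorem norm_det_eq_one_of_inK_blk (hm : 1 ≤ m) {a : Matrix (Fin n) (Fin n) ℚ_[p]}
    {b c : Fin n → ℚ_[p]} {d : ℚ_[p]} (hg : InK p n m (blk p n a b c d)) : ‖a.det‖ = 1 := by
  obtain ⟨ha, hb, hdet, hc, hd⟩ := (inK_blk_iff a b c d).1 hg
  have hε := zpow_neg_natCast_lt_one p hm
  have hd1 : ‖d‖ = 1 := by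
    simpa using norm_add_eq_left_of_norm_lt (x := (1 : ℚ_[p])) (y := d - 1)
      (by simpa using hd.trans_lt hε)
  have hrest : ‖(blk p n a b c 0).det‖ < 1 := by
    refine lt_of_le_of_lt (norm_det_le_prod _ (w := Fin.snoc (fun _ => 1) ((p : ℝ) ^ (-(m : ℤ))))
      ?_ ?_) ?_
    · simp [Fin.forall_fin_succ']
    · simpa [Fin.forall_fin_succ', ha, hb] using hc
    · simpa [Fin.prod_univ_castSucc] using hε
  have hsplit : d * a.det = (blk p n a b c d).det + -(blk p n a b c 0).det := by
    rw [det_blk]; ring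
  have := norm_add_eq_left_of_norm_lt (x := (blk p n a b c d).det) (y := -(blk p n a b c 0).det)
    (by rwa [norm_neg, hdet])
  rwa [← hsplit, hdet, norm_mul, hd1, one_mul] at this

theorem inPrincipalCongr_inv_mul {ι : Type*} [Fintype ι] [DecidableEq ι] {g g' : Matrix ι ι ℚ_[p]}
    (hg' : ∀ j k, ‖g' j k‖ ≤ 1) (hdet' : ‖g'.det‖ = 1) (hdet : ‖g.det‖ = 1)
    (h : ∀ j k, ‖(g - g') j k‖ ≤ (p : ℝ) ^ (-(m : ℤ))) : InPrincipalCongr p m (g'⁻¹ * g) := by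
  have hunit : IsUnit g'.det := isUnit_iff_ne_zero.2 (norm_ne_zero_iff.1 (by simp [hdet']))
  have hsub : g'⁻¹ * g - 1 = g'⁻¹ * (g - g') := by rw [mul_sub, nonsing_inv_mul g' hunit]
  refine ⟨?_, ?_⟩
  · rw [hsub]
    exact norm_mul_apply_le (by positivity) (norm_inv_apply_le_one hg' hdet') h
  · rw [det_mul, det_nonsing_inv, Ring.inverse_eq_inv', norm_mul, norm_inv, hdet', hdet,
      inv_one, one_mul]

theorem InPrincipalCongr.inK {M : Matrix (Fin (n + 1)) (Fin (n + 1)) ℚ_[p]}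
    (h : InPrincipalCongr p m M) : InK p n m M := by
  obtain ⟨hM, hdet⟩ := h
  refine ⟨fun j k => ?_, hdet, fun k => ?_, ?_⟩
  · calc ‖M j k‖ = ‖(M - 1) j k + (1 : Matrix (Fin (n + 1)) (Fin (n + 1)) ℚ_[p]) j k‖ := by simp
      _ ≤ max ‖(M - 1) j k‖ ‖(1 : Matrix (Fin (n + 1)) (Fin (n + 1)) ℚ_[p]) j k‖ :=
          norm_add_le_max _ _
      _ ≤ 1 := max_le ((hM j k).trans (zpow_neg_natCast_le_one p m)) (by
          rcases eq_or_ne j k with rfl | hjk <;> simp [one_apply, *])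
  · simpa [one_apply_ne (Fin.castSucc_lt_last k).ne'] using hM (Fin.last n) k.castSucc
  · simpa using hM (Fin.last n) (Fin.last n)

end CongruenceSubgroups

section Conjugation

variable {p} {n m : ℕ}

def varpiExp (f : Fin n → ℤ) : Fin (n + 1) → ℤ :=
  Fin.snoc f 0

@[simp]
theorem varpiExp_castSucc (f : Fin n → ℤ) (j : Fin n) : varpiExp f j.castSucc = f j :=
  Fin.snoc_castSucc ..

@[simp]
theorem varpiExp_last (f : Fin n → ℤ) : varpiExp f (Fin.last n) = 0 :=
  Fin.snoc_last ..

theorem varpi_eq_diagonal (f : Fin n → ℤ) :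
    varpi p n f = diagonal fun j => (p : ℚ_[p]) ^ varpiExp f j := by
  rw [varpi]
  congr 1
  funext j
  refine Fin.lastCases ?_ (fun j => ?_) j <;> simp

theorem varpi_neg_mul_mul_varpi_apply (f : Fin n → ℤ) (X : Matrix (Fin (n + 1)) (Fin (n + 1)) ℚ_[p])
    (j k : Fin (n + 1)) :
    (varpi p n (-f) * X * varpi p n f) j k =
      (p : ℚ_[p]) ^ (-varpiExp f j) * X j k * (p : ℚ_[p]) ^ varpiExp f k := by
  have hneg : varpiExp (-f) j = -varpiExp f j := by
    refine Fin.lastCases ?_ (fun j => ?_) j <;> simp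
  rw [varpi_eq_diagonal, varpi_eq_diagonal, mul_diagonal, diagonal_mul, hneg]

theorem norm_varpi_neg_mul_mul_varpi_apply (f : Fin n → ℤ)
    (X : Matrix (Fin (n + 1)) (Fin (n + 1)) ℚ_[p]) (j k : Fin (n + 1)) :
    ‖(varpi p n (-f) * X * varpi p n f) j k‖ =
      (p : ℝ) ^ (varpiExp f j - varpiExp f k) * ‖X j k‖ := by
  have hp : (p : ℝ) ≠ 0 := Nat.cast_ne_zero.2 (Fact.out : p.Prime).ne_zero
  rw [varpi_neg_mul_mul_varpi_apply, norm_mul, norm_mul, Padic.norm_p_zpow, Padic.norm_p_zpow,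
    neg_neg, zpow_sub₀ hp, div_eq_mul_inv, ← _root_.zpow_neg]
  ring

theorem det_varpi_neg_mul_mul_varpi (f : Fin n → ℤ) (X : Matrix (Fin (n + 1)) (Fin (n + 1)) ℚ_[p]) :
    (varpi p n (-f) * X * varpi p n f).det = X.det := by
  have hp : (p : ℚ_[p]) ≠ 0 := Nat.cast_ne_zero.2 (Fact.out : p.Prime).ne_zero
  have hinv : varpi p n (-f) * varpi p n f = 1 := by
    rw [varpi_eq_diagonal, varpi_eq_diagonal, diagonal_mul_diagonal, ← diagonal_one]
    congr 1
    funext j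
    refine Fin.lastCases ?_ (fun j => ?_) j <;> simp [_root_.zpow_neg, zpow_ne_zero, hp]
  rw [det_mul, det_mul, mul_right_comm, ← det_mul, hinv, det_one, one_mul]

theorem InPrincipalCongr.inK_varpi_conj (hm : 1 ≤ m) {f : Fin n → ℤ} (hf : ∀ j, f j = 0 ∨ f j = 1)
    {M : Matrix (Fin (n + 1)) (Fin (n + 1)) ℚ_[p]} (h : InPrincipalCongr p m M) :
    InK p n m (varpi p n (-f) * M * varpi p n f) := by
  have hp : (1 : ℝ) ≤ p := Nat.one_le_cast.2 (Fact.out : p.Prime).one_le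
  obtain ⟨hint, -, hrow, hcorner⟩ := h.inK
  have hF : ∀ j, varpiExp f j = 0 ∨ varpiExp f j = 1 :=
    Fin.forall_fin_succ'.2 ⟨by simpa using hf, by simp⟩
  refine ⟨fun j k => ?_, by rw [det_varpi_neg_mul_mul_varpi]; exact h.2, fun k => ?_, ?_⟩
  · rw [norm_varpi_neg_mul_mul_varpi_apply]
    by_cases hjk : varpiExp f j - varpiExp f k ≤ 0
    · exact mul_le_one₀ (zpow_le_one_of_nonpos₀ hp hjk) (norm_nonneg _) (hint j k)
    have h1 : varpiExp f j - varpiExp f k = 1 := by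
      rcases hF j with hj | hj <;> rcases hF k with hk | hk <;> omega
    have hne : j ≠ k := by
      rintro rfl
      simp at h1
    have hjk' : ‖M j k‖ ≤ (p : ℝ) ^ (-(m : ℤ)) := by simpa [one_apply_ne hne] using h.1 j k
    calc (p : ℝ) ^ (varpiExp f j - varpiExp f k) * ‖M j k‖
        ≤ (p : ℝ) ^ (1 : ℤ) * (p : ℝ) ^ (-(m : ℤ)) := by
          rw [h1]
          gcongr
      _ = (p : ℝ) ^ (1 - m : ℤ) := by rw [← zpow_add₀ (by positivity)]; rfl
      _ ≤ 1 := zpow_le_one_of_nonpos₀ hp (by omega)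
  · rw [norm_varpi_neg_mul_mul_varpi_apply, varpiExp_last, zero_sub]
    refine (mul_le_of_le_one_left (norm_nonneg _) (zpow_le_one_of_nonpos₀ hp ?_)).trans (hrow k)
    rcases hF k.castSucc with hk | hk <;> omega
  · simpa [varpi_neg_mul_mul_varpi_apply] using hcorner

end Conjugation

theorem coset_representative_of_mem_K_general
    (p : ℕ) [Fact p.Prime] (n : ℕ) (m : ℕ) (hm : 1 ≤ m)
    (i : ℕ)
    (a : Matrix (Fin n) (Fin n) ℚ_[p]) (b c : Fin n → ℚ_[p]) (d : ℚ_[p])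
    (hg : InK p n m (blk p n a b c d)) :
    InH p n a ∧ InK p n m (blk p n a b 0 1) ∧
      InKcap p n m i ((blk p n a b 0 1)⁻¹ * blk p n a b c d) := by
  obtain ⟨ha, hb, hdet, hc, hd⟩ := (inK_blk_iff a b c d).1 hg
  have hadet : ‖a.det‖ = 1 := norm_det_eq_one_of_inK_blk hm hg
  have hg' : InK p n m (blk p n a b 0 1) :=
    (inK_blk_iff a b 0 1).2 ⟨ha, hb, by rwa [det_blk_zero, one_mul], by simp, by simp⟩
  have hM : InPrincipalCongr p m ((blk p n a b 0 1)⁻¹ * blk p n a b c d) := by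
    refine inPrincipalCongr_inv_mul hg'.1 hg'.2.1 hdet ?_
    rw [blk_sub, forall_norm_blk_apply_le_iff]
    exact ⟨by simp, by simp, by simpa using hc, by simpa using hd⟩
  have hfvec : ∀ j, fvec n i j = 0 ∨ fvec n i j = 1 := fun j => by
    unfold fvec
    split_ifs <;> simp
  exact ⟨⟨ha, hadet⟩, hg', hM.inK, hM.inK_varpi_conj hm hfvec⟩

/-- for `g = [[a,b],[c,d]] ∈ K_m` (with `m ≥ 1`), the block `a` lies in
`GL_n(ℤ_p)`, the matrix `g' = [[a,b],[0,1]]` lies in `K_m`, and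
`g'⁻¹ · g ∈ K_m ∩ ϖ^{f^i} K_m ϖ^{-f^i}`; in particular `g` and `g'` represent the same
left coset of `K_m ∩ ϖ^{f^i} K_m ϖ^{-f^i}` in `K_m`. -/
theorem coset_representative_of_mem_K
    (p : ℕ) [Fact p.Prime] (n : ℕ) (hn : 1 ≤ n) (m : ℕ) (hm : 1 ≤ m)
    (i : ℕ) (hi1 : 1 ≤ i) (hi2 : i ≤ n)
    (a : Matrix (Fin n) (Fin n) ℚ_[p]) (b c : Fin n → ℚ_[p]) (d : ℚ_[p])
    (hg : InK p n m (blk p n a b c d)) :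
    InH p n a ∧ InK p n m (blk p n a b 0 1) ∧
      InKcap p n m i ((blk p n a b 0 1)⁻¹ * blk p n a b c d) :=
  coset_representative_of_mem_K_general p n m hm i a b c d hg
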